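/- arXiv:0708.4097 — 3 statements merged into one kernel-verified Lean document; each statement's English description precedes it below -/
import Mathlib

section
/- Let (H,L) be a reduced dynamical base, i.e. ∩_{χ∈L̂}ker χ={0}, and suppose ⊕_{χ∈L̂}L^χ≠{0}. Then ⊕_{χ∈L̂}L^χ is an H-submodule, an H-subcomodule and a subalgebra of L; hence, with the restricted structures, it is itself an H-base algebra. Moreover, for each χ with L^χ≠0 and idempotent generator e_χ, and each character α of H, the element α(e_χ⁽¹⁾)e_χ^[∞] is the idempotent generating L^{ᾱ·χ}. -/
/- Preliminaries: dynamical bases (Hopf algebra H, base algebra L) following Mudrov,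
"On dynamical smash product". -/

noncomputable section
open TensorProduct LinearMap

namespace Dyn

variable (k : Type*) [Field k]
variable (H : Type*) [Ring H] [HopfAlgebra k H]
variable (L : Type*) [Ring L] [Algebra k L]

/-- The "diagonal" action of `H` on a tensor product of two `H`-modules,
`h ⊗ (a ⊗ b) ↦ (h⁽¹⁾ ▷ a) ⊗ (h⁽²⁾ ▷ b)`, where the actions are given in
uncurried form `H ⊗ A → A`, `H ⊗ B → B`. -/
def diagAct {A B : Type*} [AddCommGroup A] [Module k A] [AddCommGroup B] [Module k B]
    (fA : H ⊗[k] A →ₗ[k] A) (fB : H ⊗[k] B →ₗ[k] B) :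
    H ⊗[k] (A ⊗[k] B) →ₗ[k] A ⊗[k] B :=
  TensorProduct.map fA fB
    ∘ₗ (tensorTensorTensorComm k H H A B).toLinearMap
    ∘ₗ rTensor (A ⊗[k] B) (Coalgebra.comul (R := k) (A := H))

/-- The right-hand side of the Yetter-Drinfeld compatibility condition
`h ⊗ λ ↦ h⁽¹⁾ λ⁽¹⁾ γ(h⁽³⁾) ⊗ (h⁽²⁾ ▷ λ^[∞])`, as a linear map `H ⊗ L → H ⊗ L`,
built from an action `act` and a coaction `coact`. -/
def ydRHS (act : H →ₗ[k] L →ₗ[k] L) (coact : L →ₗ[k] H ⊗[k] L) :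
    H ⊗[k] L →ₗ[k] H ⊗[k] L :=
  rTensor L (LinearMap.mul' k H)
    ∘ₗ (TensorProduct.assoc k H H L).symm.toLinearMap
    ∘ₗ TensorProduct.map (LinearMap.mul' k H)
        (TensorProduct.map (HopfAlgebra.antipode (R := k)) (TensorProduct.lift act)
          ∘ₗ (TensorProduct.assoc k H H L).toLinearMap
          ∘ₗ rTensor L (TensorProduct.comm k H H).toLinearMap)
    ∘ₗ (tensorTensorTensorComm k H (H ⊗[k] H) H L).toLinearMap
    ∘ₗ TensorProduct.map
        (lTensor H (Coalgebra.comul (R := k) (A := H)) ∘ₗ Coalgebra.comul (R := k))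
        coact

/-- A base algebra `L` over a Hopf algebra `H` (so `(H, L)` is a dynamical base):
`L` is a left `H`-module algebra, a left `H`-comodule algebra, the action and coaction
satisfy the Yetter-Drinfeld condition, and `L` is braided commutative. -/
structure BaseAlgebra : Type _ where
  /-- the left action of `H` on `L` -/
  act : H →ₗ[k] L →ₗ[k] L
  /-- the left coaction of `H` on `L` -/
  coact : L →ₗ[k] H ⊗[k] L
  act_mul_act : ∀ (h h' : H) (l : L), act (h * h') l = act h (act h' l)
  act_one_act : ∀ l : L, act 1 l = l
  /-- `L` is an `H`-module algebra: `h ▷ (λμ) = (h⁽¹⁾ ▷ λ)(h⁽²⁾ ▷ μ)` -/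
  moduleAlgebra :
    TensorProduct.lift act ∘ₗ lTensor H (LinearMap.mul' k L) =
      LinearMap.mul' k L ∘ₗ diagAct k H (TensorProduct.lift act) (TensorProduct.lift act)
  /-- `h ▷ 1 = ε(h) 1` -/
  act_unit : ∀ h : H, act h 1 = Coalgebra.counit (R := k) h • (1 : L)
  /-- coassociativity of the coaction -/
  coassoc :
    rTensor L (Coalgebra.comul (R := k) (A := H)) ∘ₗ coact =
      (TensorProduct.assoc k H H L).symm.toLinearMap ∘ₗ lTensor H coact ∘ₗ coact
  /-- counit property of the coaction -/
  counit_coact :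
    ∀ l : L, (TensorProduct.lid k L)
      (rTensor L (Coalgebra.counit (R := k) (A := H)) (coact l)) = l
  /-- `L` is an `H`-comodule algebra: the coaction is an algebra map -/
  coact_mul : ∀ l m : L, coact (l * m) = coact l * coact m
  coact_one : coact 1 = 1
  /-- the Yetter-Drinfeld compatibility condition -/
  yd : coact ∘ₗ TensorProduct.lift act = ydRHS k H L act coact
  /-- braided commutativity: `λμ = (λ⁽¹⁾ ▷ μ) λ^[∞]` -/
  braided :
    LinearMap.mul' k L =
      LinearMap.mul' k L ∘ₗ rTensor L (TensorProduct.lift act)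
        ∘ₗ (TensorProduct.assoc k H L L).symm.toLinearMap
        ∘ₗ lTensor H (TensorProduct.comm k L L).toLinearMap
        ∘ₗ (TensorProduct.assoc k H L L).toLinearMap
        ∘ₗ rTensor L coact

variable {k H L}

/-- An invariant character of the base algebra `L`: a unital algebra homomorphism
`L → k` with `χ(h ▷ λ) = ε(h) χ(λ)`. -/
def BaseAlgebra.IsInvChar (B : BaseAlgebra k H L) (χ : L →ₐ[k] k) : Prop :=
  ∀ (h : H) (l : L), χ (B.act h l) = Coalgebra.counit (R := k) h * χ l

/-- `e ∈ L` is a left `χ`-generator: `λ e = χ(λ) e` for all `λ`. -/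
def IsLeftGen (χ : L →ₐ[k] k) (e : L) : Prop := ∀ l : L, l * e = χ l • e

/-- `e ∈ L` is a right `χ`-generator: `e λ = χ(λ) e` for all `λ`. -/
def IsRightGen (χ : L →ₐ[k] k) (e : L) : Prop := ∀ l : L, e * l = χ l • e

/-- The homomorphism `ι_χ : L → H`, `λ ↦ λ⁽¹⁾ χ(λ^[∞])`, associated to a character. -/
def BaseAlgebra.iota (B : BaseAlgebra k H L) (χ : L →ₗ[k] k) : L →ₗ[k] H :=
  (TensorProduct.rid k H).toLinearMap ∘ₗ lTensor H χ ∘ₗ B.coact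

/-- Evaluation of a functional `η ∈ H^*` against the first leg of the coaction:
`λ ↦ ⟨η, λ⁽¹⁾⟩ λ^[∞]`.  This is the action of `H^*_op ⊂ D(H)` on `L`. -/
def BaseAlgebra.coactEval (B : BaseAlgebra k H L) (η : H →ₗ[k] k) : L →ₗ[k] L :=
  (TensorProduct.lid k L).toLinearMap ∘ₗ rTensor L η ∘ₗ B.coact

/-- The adjoint character `χ̃ : λ ↦ χ(ϑ̄ ▷ λ)` of a character `χ`, where
`ϑ̄ = Σᵢ ηⁱ γ(hᵢ)` is the inverse Drinfeld element of the double, computed with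
respect to a basis `b` of `H`: `χ̃(λ) = Σᵢ ⟨ηⁱ, (γ(hᵢ) ▷ λ)⁽¹⁾⟩ χ((γ(hᵢ) ▷ λ)^[∞])`. -/
def BaseAlgebra.adjChar (B : BaseAlgebra k H L) (χ : L →ₗ[k] k)
    {ι : Type*} [Fintype ι] [DecidableEq ι] (b : Module.Basis ι k H) : L →ₗ[k] k :=
  ∑ i : ι, χ ∘ₗ B.coactEval (b.coord i) ∘ₗ B.act (HopfAlgebra.antipode (R := k) (b i))

end Dyn

namespace Dyn

open LinearMap TensorProduct

variable {k : Type*} [Field k] {H : Type*} [Ring H] [HopfAlgebra k H]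
variable {L : Type*} [Ring L] [Algebra k L]

/-- The subspace `⊕_{χ ∈ L̂} L^χ` of `L`: the span of all left `χ`-generators over all
invariant characters `χ`. -/
def BaseAlgebra.genSum (B : BaseAlgebra k H L) : Submodule k L :=
  Submodule.span k {e : L | ∃ χ : L →ₐ[k] k, B.IsInvChar χ ∧ IsLeftGen χ e}

/-!
Reducedness says that the invariant characters separate the points of `L`. Hence
`h ▷ λ = ε(h) λ`, and a left `χ`-generator is killed by every invariant character other than
`χ`, so `L^χ` is the line through `e_χ`. Since `ᾱ` is the convolution inverse of `α`, the map
`λ ↦ α(λ⁽¹⁾) λ^[∞]` is an algebra automorphism `σ` of `L` with inverse given by `ᾱ`, and any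
algebra automorphism carries `L^χ` onto `L^{χ ∘ σ⁻¹} = L^{ᾱ·χ}`.

For the comodule claim let `e` be a `χ`-generator. Coassociativity and the antipode give
`(1 ⊗ λ) δ(e) = (γ(ι_χ(λ)) ⊗ 1) δ(e)`, so the slices `ξ(e⁽¹⁾) e^[∞]`, `ξ ∈ H^*`, span a
finite-dimensional subspace stable under left multiplication. By Dedekind's independence of
characters, an element `w` of such a subspace is nonzero under only finitely many characters, and
then `w = ∑ u_χ w` with `u_χ w ∈ L^χ`, where `ψ(u_χ) = δ_{ψχ}` on that finite set.
-/

theorem IsLeftGen.apply_eq_zero_of_ne {χ ψ : L →ₐ[k] k} {e : L} (he : IsLeftGen χ e)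
    (hψ : ψ ≠ χ) : ψ e = 0 := by
  obtain ⟨l, hl⟩ := DFunLike.ne_iff.1 hψ
  have h := congrArg ψ (he l)
  rw [map_mul, map_smul, smul_eq_mul] at h
  by_contra he0
  exact hl (mul_right_cancel₀ he0 h)

theorem IsLeftGen.apply_self_eq_one {χ : L →ₐ[k] k} {e : L} (he : IsLeftGen χ e)
    (hidem : e * e = e) (hne : e ≠ 0) : χ e = 1 := by
  have h : (χ e - 1) • e = 0 := by rw [sub_smul, one_smul, ← he, hidem, sub_self]
  exact sub_eq_zero.1 ((smul_eq_zero.1 h).resolve_right hne)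

theorem IsLeftGen.map {L' : Type*} [Ring L'] [Algebra k L'] {χ : L →ₐ[k] k} {e : L}
    (he : IsLeftGen χ e) (σ : L ≃ₐ[k] L') :
    IsLeftGen (χ.comp (σ.symm : L' →ₐ[k] L)) (σ e) := by
  intro l
  calc l * σ e = σ (σ.symm l * e) := by rw [map_mul, AlgEquiv.apply_symm_apply]
    _ = _ := by rw [he, map_smul]; rfl

theorem surjective_pi_algHom_of_injective {ι : Type*} [Fintype ι] {ψ : ι → L →ₐ[k] k}
    (hψ : Function.Injective ψ) :
    Function.Surjective (LinearMap.pi fun i => (ψ i).toLinearMap) := by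
  classical
  have hind : LinearIndependent k fun i => (ψ i : L → k) :=
    (linearIndependent_monoidHom L k).comp (fun i => (ψ i : L →* k))
      fun i j hij => hψ (AlgHom.coe_monoidHom_injective hij)
  rw [← LinearMap.dualMap_injective_iff, injective_iff_map_eq_zero]
  intro φ hφ
  have hsum : ∑ i, (φ fun j => if i = j then 1 else 0) • (ψ i : L → k) = 0 := by
    funext l
    have h := LinearMap.congr_fun hφ l
    rw [LinearMap.dualMap_apply, LinearMap.pi_apply_eq_sum_univ φ] at h
    simpa [mul_comm] using h
  have hc := Fintype.linearIndependent_iff.1 hind _ hsum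
  ext i
  have hi : (Pi.single i 1 : ι → k) = fun j => if i = j then 1 else 0 := by
    funext j
    simp [Pi.single_apply, eq_comm]
  simpa [hi] using hc i

theorem exists_dual_family_of_injective {ι : Type*} [Finite ι] [DecidableEq ι]
    {ψ : ι → L →ₐ[k] k} (hψ : Function.Injective ψ) :
    ∃ u : ι → L, ∀ i j, ψ i (u j) = if i = j then 1 else 0 := by
  have := Fintype.ofFinite ι
  choose u hu using fun j => surjective_pi_algHom_of_injective hψ (Pi.single j 1)
  exact ⟨u, fun i j => by simpa [Pi.single_apply] using congr_fun (hu j) i⟩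

theorem finite_setOf_apply_ne_zero {W : Submodule k L} [FiniteDimensional k W]
    (hW : ∀ l, ∀ x ∈ W, l * x ∈ W) {w : L} (hw : w ∈ W) :
    {χ : L →ₐ[k] k | χ w ≠ 0}.Finite := by
  set S := {χ : L →ₐ[k] k | χ w ≠ 0}
  have hchar : LinearIndependent k fun χ : S => ((χ : L →ₐ[k] k) : L → k) :=
    (linearIndependent_monoidHom L k).comp (fun χ : S => ((χ : L →ₐ[k] k) : L →* k))
      fun χ χ' h => Subtype.ext (AlgHom.coe_monoidHom_injective h)
  have hind :
      LinearIndependent k fun χ : S => (χ : L →ₐ[k] k).toLinearMap ∘ₗ W.subtype := by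
    rw [linearIndependent_iff'] at hchar ⊢
    intro s g hg χ hχ
    have h :
        ∑ χ ∈ s, (g χ * (χ : L →ₐ[k] k) w) • ((χ : L →ₐ[k] k) : L → k) = 0 := by
      funext l
      have := LinearMap.congr_fun hg ⟨l * w, hW l w hw⟩
      simpa [mul_comm, mul_left_comm] using this
    exact (mul_eq_zero.1 (hchar s _ h χ hχ)).resolve_right χ.2
  exact Set.finite_coe_iff.1 hind.finite_of_isNoetherian

section Slices

variable {M N : Type*} [AddCommGroup M] [Module k M] [AddCommGroup N] [Module k N]

theorem mem_range_lTensor_subtype_of_forall_slice_mem (t : M ⊗[k] N) (P : Submodule k N)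
    (h : ∀ ξ : Module.Dual k M, TensorProduct.lid k N (rTensor N ξ t) ∈ P) :
    t ∈ range (lTensor M P.subtype) := by
  classical
  let b := Module.Basis.ofVectorSpace k M
  set c := TensorProduct.equivFinsuppOfBasisLeft b t
  have hc : ∀ i, c i ∈ P := fun i => by
    rw [TensorProduct.equivFinsuppOfBasisLeft_apply]
    exact h _
  refine ⟨∑ i ∈ c.support, b i ⊗ₜ ⟨c i, hc i⟩, ?_⟩
  rw [← (TensorProduct.equivFinsuppOfBasisLeft b).symm_apply_apply t,
    TensorProduct.equivFinsuppOfBasisLeft_symm_apply]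
  simp [Finsupp.sum, c]

theorem finiteDimensional_span_slices (t : M ⊗[k] N) :
    FiniteDimensional k
      (Submodule.span k (Set.range fun ξ : Module.Dual k M =>
        TensorProduct.lid k N (rTensor N ξ t))) := by
  classical
  obtain ⟨S, rfl⟩ := TensorProduct.exists_finset t
  refine Submodule.finiteDimensional_of_le (Submodule.span_le.2 ?_ :
    _ ≤ Submodule.span k (S.image Prod.snd : Set N))
  rintro _ ⟨ξ, rfl⟩
  simp only [map_sum, rTensor_tmul, TensorProduct.lid_tmul, SetLike.mem_coe]
  exact Submodule.sum_mem _ fun p hp =>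
    Submodule.smul_mem _ _ (Submodule.subset_span (Finset.mem_image_of_mem _ hp))

end Slices

section Coaction

variable (B : BaseAlgebra k H L)

theorem BaseAlgebra.lTensor_coact_coact (x : L) :
    lTensor H B.coact (B.coact x) =
      TensorProduct.assoc k H H L (rTensor L (Coalgebra.comul (R := k)) (B.coact x)) := by
  rw [← LinearMap.comp_apply (rTensor L _), B.coassoc]
  simp

theorem BaseAlgebra.coactEval_coactEval (θ η : Module.Dual k H) (x : L) :
    B.coactEval η (B.coactEval θ x) =
      B.coactEval (WithConv.toConv θ * WithConv.toConv η).ofConv x := by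
  have hnat : ∀ t : H ⊗[k] L, B.coact (TensorProduct.lid k L (rTensor L θ t)) =
      TensorProduct.lid k (H ⊗[k] L) (rTensor _ θ (lTensor H B.coact t)) := fun t => by
    induction t using TensorProduct.induction_on <;> simp_all
  have hcomb : ∀ u : (H ⊗[k] H) ⊗[k] L,
      TensorProduct.lid k L (rTensor L η
        (TensorProduct.lid k (H ⊗[k] L) (rTensor _ θ (TensorProduct.assoc k H H L u)))) =
      TensorProduct.lid k L (rTensor L (LinearMap.mul' k k ∘ₗ TensorProduct.map θ η) u) :=
    fun u => by
    induction u using TensorProduct.induction_on with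
    | zero => simp
    | tmul a x =>
      induction a using TensorProduct.induction_on with
      | zero => simp
      | tmul h h' => simp [smul_smul]
      | add a a' ha ha' => simp_all [TensorProduct.add_tmul]
    | add u u' hu hu' => simp_all
  simp only [BaseAlgebra.coactEval, LinearMap.comp_apply, LinearEquiv.coe_coe, hnat,
    B.lTensor_coact_coact, hcomb, LinearMap.convMul_def, WithConv.ofConv_toConv,
    LinearMap.rTensor_comp_apply]

theorem convMul_algHom_comp_antipode (α : H →ₐ[k] k) :
    WithConv.toConv (α.toLinearMap ∘ₗ HopfAlgebra.antipode k) *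
      WithConv.toConv α.toLinearMap = 1 := by
  have h := LinearMap.algHom_comp_convMul_distrib α (WithConv.toConv (HopfAlgebra.antipode k))
    (WithConv.toConv LinearMap.id)
  rw [LinearMap.antipode_mul_id] at h
  apply WithConv.ext
  rw [WithConv.ofConv_toConv, LinearMap.comp_id] at h
  rw [← h]
  ext
  simp

theorem algHom_convMul_comp_antipode (α : H →ₐ[k] k) :
    WithConv.toConv α.toLinearMap *
      WithConv.toConv (α.toLinearMap ∘ₗ HopfAlgebra.antipode k) = 1 := by
  have h := LinearMap.algHom_comp_convMul_distrib α (WithConv.toConv LinearMap.id)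
    (WithConv.toConv (HopfAlgebra.antipode k))
  rw [LinearMap.id_mul_antipode] at h
  apply WithConv.ext
  rw [WithConv.ofConv_toConv, LinearMap.comp_id] at h
  rw [← h]
  ext
  simp

theorem BaseAlgebra.coactEval_one (x : L) :
    B.coactEval (1 : WithConv (H →ₗ[k] k)).ofConv x = x :=
  B.counit_coact x

theorem BaseAlgebra.coactEval_eq_algHom (α : H →ₐ[k] k) (x : L) :
    B.coactEval α.toLinearMap x =
      Algebra.TensorProduct.lid k L (Algebra.TensorProduct.map α (AlgHom.id k L) (B.coact x)) :=
  rfl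

def BaseAlgebra.twist (α : H →ₐ[k] k) : L ≃ₐ[k] L :=
  AlgEquiv.ofLinearEquiv
    (LinearEquiv.ofLinearMap (B.coactEval α.toLinearMap)
      (B.coactEval (α.toLinearMap ∘ₗ HopfAlgebra.antipode k))
      (LinearMap.ext fun x => by
        rw [LinearMap.comp_apply, B.coactEval_coactEval, convMul_algHom_comp_antipode,
          B.coactEval_one, LinearMap.id_apply])
      (LinearMap.ext fun x => by
        rw [LinearMap.comp_apply, B.coactEval_coactEval, algHom_convMul_comp_antipode,
          B.coactEval_one, LinearMap.id_apply]))
    (by simp [B.coactEval_eq_algHom, B.coact_one])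
    (fun x y => by simp [B.coactEval_eq_algHom, B.coact_mul])

theorem BaseAlgebra.twist_apply (α : H →ₐ[k] k) (x : L) :
    B.twist α x = B.coactEval α.toLinearMap x := rfl

end Coaction

section Generators

variable (B : BaseAlgebra k H L)

/-- `γ(λ⁽¹⁾) λ⁽²⁾ ⊗ λ^[∞] = 1 ⊗ λ` -/
theorem BaseAlgebra.antipode_mul_coact_coact (l : L) :
    LinearMap.mul' k (H ⊗[k] L) (TensorProduct.map
      ((Algebra.TensorProduct.includeLeft : H →ₐ[k] H ⊗[k] L).toLinearMap ∘ₗ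
        HopfAlgebra.antipode k) B.coact (B.coact l)) = 1 ⊗ₜ l := by
  have hassoc : ∀ u : (H ⊗[k] H) ⊗[k] L,
      LinearMap.mul' k (H ⊗[k] L) (rTensor _
        ((Algebra.TensorProduct.includeLeft : H →ₐ[k] H ⊗[k] L).toLinearMap ∘ₗ
          HopfAlgebra.antipode k) (TensorProduct.assoc k H H L u)) =
      rTensor L (LinearMap.mul' k H ∘ₗ rTensor H (HopfAlgebra.antipode k)) u := fun u => by
    induction u using TensorProduct.induction_on with
    | zero => simp
    | tmul a x =>
      induction a using TensorProduct.induction_on with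
      | zero => simp
      | tmul h h' => simp
      | add a a' ha ha' => simp_all [TensorProduct.add_tmul]
    | add u u' hu hu' => simp_all
  have hcounit : ∀ t : H ⊗[k] L,
      rTensor L (Algebra.linearMap k H ∘ₗ Coalgebra.counit) t =
        1 ⊗ₜ TensorProduct.lid k L (rTensor L Coalgebra.counit t) := fun t => by
    induction t using TensorProduct.induction_on with
    | zero => simp
    | tmul h x => simp [Algebra.algebraMap_eq_smul_one, TensorProduct.smul_tmul]
    | add t t' ht ht' => simp_all [TensorProduct.tmul_add]
  rw [← LinearMap.rTensor_comp_lTensor, LinearMap.comp_apply, B.lTensor_coact_coact, hassoc,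
    ← LinearMap.rTensor_comp_apply, LinearMap.comp_assoc, HopfAlgebra.mul_antipode_rTensor_comul,
    hcounit, B.counit_coact]

theorem BaseAlgebra.one_tmul_mul_coact_of_isLeftGen {χ : L →ₐ[k] k} {e : L}
    (he : IsLeftGen χ e) (l : L) :
    (1 ⊗ₜ[k] l) * B.coact e =
      (HopfAlgebra.antipode k (B.iota χ.toLinearMap l) ⊗ₜ[k] 1) * B.coact e := by
  have key : ∀ t : H ⊗[k] L,
      LinearMap.mul' k (H ⊗[k] L) (TensorProduct.map
        ((Algebra.TensorProduct.includeLeft : H →ₐ[k] H ⊗[k] L).toLinearMap ∘ₗ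
          HopfAlgebra.antipode k) B.coact t) * B.coact e =
      (HopfAlgebra.antipode k (TensorProduct.rid k H (lTensor H χ.toLinearMap t)) ⊗ₜ[k] 1) *
        B.coact e := by
    intro t
    induction t using TensorProduct.induction_on with
    | zero => simp
    | tmul h x =>
      simp [mul_assoc, ← B.coact_mul, he x, ← TensorProduct.smul_tmul']
    | add t t' ht ht' => simp_all [add_mul, TensorProduct.add_tmul]
  rw [← B.antipode_mul_coact_coact l]
  exact key _

theorem BaseAlgebra.mul_coactEval_of_isLeftGen {χ : L →ₐ[k] k} {e : L} (he : IsLeftGen χ e)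
    (l : L) (ξ : Module.Dual k H) :
    l * B.coactEval ξ e =
      B.coactEval (ξ ∘ₗ mulLeft k (HopfAlgebra.antipode k (B.iota χ.toLinearMap l))) e := by
  have hleft : ∀ t : H ⊗[k] L, l * TensorProduct.lid k L (rTensor L ξ t) =
      TensorProduct.lid k L (rTensor L ξ ((1 ⊗ₜ l) * t)) := fun t => by
    induction t using TensorProduct.induction_on with
    | zero => simp
    | tmul h x => simp
    | add t t' ht ht' => simp_all [mul_add]
  have hright : ∀ (c : H) (t : H ⊗[k] L),
      TensorProduct.lid k L (rTensor L ξ ((c ⊗ₜ 1) * t)) =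
        TensorProduct.lid k L (rTensor L (ξ ∘ₗ LinearMap.mulLeft k c) t) := fun c t => by
    induction t using TensorProduct.induction_on with
    | zero => simp
    | tmul h x => simp
    | add t t' ht ht' => simp_all [mul_add]
  simp only [BaseAlgebra.coactEval, LinearMap.comp_apply, LinearEquiv.coe_coe, hleft,
    B.one_tmul_mul_coact_of_isLeftGen he, hright]

theorem BaseAlgebra.mul_mem_genSum (x : L) {y : L} (hy : y ∈ B.genSum) : x * y ∈ B.genSum :=
  (Submodule.map_span_le (LinearMap.mulLeft k x) _ _).2
    (by
      rintro e ⟨χ, hχ, he⟩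
      rw [LinearMap.mulLeft_apply, he x]
      exact B.genSum.smul_mem _ (Submodule.subset_span ⟨χ, hχ, he⟩))
    (Submodule.mem_map_of_mem hy)

end Generators

section Reduced

variable {B : BaseAlgebra k H L}

def BaseAlgebra.IsReduced (B : BaseAlgebra k H L) : Prop :=
  (⨅ χ : {χ : L →ₐ[k] k // B.IsInvChar χ},
    LinearMap.ker (χ : L →ₐ[k] k).toLinearMap) = ⊥

theorem BaseAlgebra.IsReduced.ext (hB : B.IsReduced) {x y : L}
    (h : ∀ χ : L →ₐ[k] k, B.IsInvChar χ → χ x = χ y) : x = y := by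
  rw [← sub_eq_zero, ← Submodule.mem_bot k, ← hB, Submodule.mem_iInf]
  intro χ
  simp [h χ.1 χ.2]

theorem BaseAlgebra.IsReduced.act_eq_counit_smul (hB : B.IsReduced) (h : H) (l : L) :
    B.act h l = Coalgebra.counit (R := k) h • l :=
  hB.ext fun χ hχ => by rw [hχ, map_smul, smul_eq_mul]

theorem BaseAlgebra.IsReduced.eq_smul_of_isLeftGen (hB : B.IsReduced) {χ : L →ₐ[k] k}
    {e m : L} (he : IsLeftGen χ e) (he1 : χ e = 1) (hm : IsLeftGen χ m) : m = χ m • e := by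
  refine hB.ext fun ψ _ => ?_
  rw [map_smul, smul_eq_mul]
  by_cases hψ : ψ = χ
  · rw [hψ, he1, mul_one]
  · rw [hm.apply_eq_zero_of_ne hψ, he.apply_eq_zero_of_ne hψ, mul_zero]

theorem BaseAlgebra.IsReduced.mem_genSum_of_finite (hB : B.IsReduced) {w : L}
    (hw : {χ : L →ₐ[k] k | B.IsInvChar χ ∧ χ w ≠ 0}.Finite) : w ∈ B.genSum := by
  classical
  set S := {χ : L →ₐ[k] k | B.IsInvChar χ ∧ χ w ≠ 0}
  have := hw.fintype
  obtain ⟨u, hu⟩ := exists_dual_family_of_injective (ψ := fun χ : S => (χ : L →ₐ[k] k))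
    Subtype.val_injective
  have hval : ∀ ψ : L →ₐ[k] k, B.IsInvChar ψ → ∀ χ : S,
      ψ (u χ * w) = if ψ = χ then ψ w else 0 := by
    intro ψ hψ χ
    by_cases hw0 : ψ w = 0
    · simp [hw0]
    · rw [map_mul, hu ⟨ψ, hψ, hw0⟩ χ]
      simp [Subtype.ext_iff]
  have hsum : w = ∑ χ : S, u χ * w := hB.ext fun ψ hψ => by
    simp only [map_sum, hval ψ hψ]
    by_cases hw0 : ψ w = 0
    · simp [hw0]
    · rw [Finset.sum_eq_single_of_mem (⟨ψ, hψ, hw0⟩ : S) (Finset.mem_univ _), if_pos rfl]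
      intro χ _ hχ
      rw [if_neg fun h => hχ (Subtype.ext h.symm)]
  have hgen : ∀ χ : S, IsLeftGen (χ : L →ₐ[k] k) (u χ * w) := fun χ l =>
    hB.ext fun ψ hψ => by
      rw [map_mul, map_smul, smul_eq_mul, hval ψ hψ]
      split_ifs with h
      · rw [h]
      · rw [mul_zero, mul_zero]
  rw [hsum]
  exact Submodule.sum_mem _ fun χ _ => Submodule.subset_span ⟨χ, χ.2.1, hgen χ⟩

theorem IsLeftGen.exists_eq_smul_map (hB : B.IsReduced)
    {χ : L →ₐ[k] k} {e e' : L} (he : IsLeftGen χ e) (he1 : χ e = 1) (σ : L ≃ₐ[k] L)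
    (he' : IsLeftGen (χ.comp (σ.symm : L →ₐ[k] L)) e') : ∃ c : k, e' = c • σ e := by
  have hm : IsLeftGen χ (σ.symm e') := by
    simpa [AlgHom.comp_assoc] using he'.map σ.symm
  refine ⟨χ (σ.symm e'), ?_⟩
  rw [← map_smul, ← hB.eq_smul_of_isLeftGen he he1 hm, AlgEquiv.apply_symm_apply]

theorem BaseAlgebra.IsReduced.coact_mem_range_of_isLeftGen (hB : B.IsReduced) {χ : L →ₐ[k] k}
    {e : L} (he : IsLeftGen χ e) :
    B.coact e ∈ range (lTensor H B.genSum.subtype) := by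
  set W := Submodule.span k (Set.range fun ξ : Module.Dual k H => B.coactEval ξ e)
  have : FiniteDimensional k W := finiteDimensional_span_slices (B.coact e)
  have hW : ∀ l, ∀ x ∈ W, l * x ∈ W := fun l x hx =>
    (Submodule.map_span_le (LinearMap.mulLeft k l) _ W).2
      (by
        rintro _ ⟨ξ, rfl⟩
        rw [LinearMap.mulLeft_apply, B.mul_coactEval_of_isLeftGen he]
        exact Submodule.subset_span ⟨_, rfl⟩)
      (Submodule.mem_map_of_mem hx)
  refine mem_range_lTensor_subtype_of_forall_slice_mem _ _ fun ξ => hB.mem_genSum_of_finite ?_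
  exact (finite_setOf_apply_ne_zero hW (Submodule.subset_span ⟨ξ, rfl⟩)).subset fun _ h => h.2

theorem BaseAlgebra.IsReduced.coact_mem_range (hB : B.IsReduced) {x : L} (hx : x ∈ B.genSum) :
    B.coact x ∈ range (lTensor H B.genSum.subtype) :=
  (Submodule.span_le (p := (range (lTensor H B.genSum.subtype)).comap B.coact)).2
    (by rintro _ ⟨_, _, he⟩; exact hB.coact_mem_range_of_isLeftGen he) hx

end Reduced

theorem stmt5_general (B : BaseAlgebra k H L)
    (hred : (⨅ χ : {χ : L →ₐ[k] k // B.IsInvChar χ},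
      LinearMap.ker (χ : L →ₐ[k] k).toLinearMap) = ⊥) :
    -- `⊕_χ L^χ` is an `H`-submodule
    (∀ (h : H), ∀ x ∈ B.genSum, B.act h x ∈ B.genSum) ∧
    -- `⊕_χ L^χ` is an `H`-subcomodule
    (∀ x ∈ B.genSum, B.coact x ∈ LinearMap.range (lTensor H B.genSum.subtype)) ∧
    -- `⊕_χ L^χ` is a subalgebra (closed under multiplication)
    (∀ x ∈ B.genSum, ∀ y ∈ B.genSum, x * y ∈ B.genSum) ∧
    -- the twist of an idempotent generator by a character of `H`
    (∀ χ : L →ₐ[k] k, B.IsInvChar χ →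
      ∀ e : L, IsLeftGen χ e → e * e = e → e ≠ 0 →
      ∀ α : H →ₐ[k] k,
        let f := B.coactEval α.toLinearMap e
        let χ' : L →ₗ[k] k :=
          χ.toLinearMap ∘ₗ
            B.coactEval (α.toLinearMap ∘ₗ HopfAlgebra.antipode (R := k))
        f * f = f ∧ (∀ l : L, l * f = χ' l • f) ∧
          ∀ e' : L, (∀ l : L, l * e' = χ' l • e') → ∃ c : k, e' = c • f) := by
  have hB : B.IsReduced := hred
  refine ⟨fun h x hx => ?_, fun x => hB.coact_mem_range, fun x _ y => B.mul_mem_genSum x, ?_⟩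
  · rw [hB.act_eq_counit_smul h x]
    exact B.genSum.smul_mem _ hx
  intro χ _ e he hidem hne α
  exact ⟨by rw [← B.twist_apply, ← map_mul, hidem], he.map (B.twist α),
    fun e' he' => he.exists_eq_smul_map hB (he.apply_self_eq_one hidem hne) (B.twist α) he'⟩

/-- Suppose the dynamical base `(H,L)` is reduced
(`∩_{χ∈L̂} ker χ = 0`) and `⊕_{χ∈L̂} L^χ ≠ 0`.  Then `⊕_χ L^χ` is an `H`-submodule, an
`H`-subcomodule and a subalgebra of `L` (hence an `H`-base algebra with the restricted
structures).  Moreover for every invariant character `χ` with a nonzero idempotent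
generator `e_χ` of `L^χ`, and every character `α` of `H`, the element
`α(e_χ⁽¹⁾) e_χ^[∞]` is the idempotent generating `L^{ᾱ·χ}`, where
`(ᾱ·χ)(λ) = (α∘γ)(λ⁽¹⁾) χ(λ^[∞])`. -/
theorem stmt5 (B : BaseAlgebra k H L)
    (hred : (⨅ χ : {χ : L →ₐ[k] k // B.IsInvChar χ},
      LinearMap.ker (χ : L →ₐ[k] k).toLinearMap) = ⊥)
    (hne : ∃ χ : L →ₐ[k] k, B.IsInvChar χ ∧ ∃ e : L, e ≠ 0 ∧ IsLeftGen χ e) :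
    -- `⊕_χ L^χ` is an `H`-submodule
    (∀ (h : H), ∀ x ∈ B.genSum, B.act h x ∈ B.genSum) ∧
    -- `⊕_χ L^χ` is an `H`-subcomodule
    (∀ x ∈ B.genSum, B.coact x ∈ LinearMap.range (lTensor H B.genSum.subtype)) ∧
    -- `⊕_χ L^χ` is a subalgebra (closed under multiplication)
    (∀ x ∈ B.genSum, ∀ y ∈ B.genSum, x * y ∈ B.genSum) ∧
    -- the twist of an idempotent generator by a character of `H`
    (∀ χ : L →ₐ[k] k, B.IsInvChar χ →
      ∀ e : L, IsLeftGen χ e → e * e = e → e ≠ 0 →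
      ∀ α : H →ₐ[k] k,
        let f := B.coactEval α.toLinearMap e
        let χ' : L →ₗ[k] k :=
          χ.toLinearMap ∘ₗ
            B.coactEval (α.toLinearMap ∘ₗ HopfAlgebra.antipode (R := k))
        f * f = f ∧ (∀ l : L, l * f = χ' l • f) ∧
          ∀ e' : L, (∀ l : L, l * e' = χ' l • e') → ∃ c : k, e' = c • f) :=
  stmt5_general B hred

end Dyn
end
end

section
/- Let (H,L) be a dynamical base and χ an invariant character of L. Let Ξ_χ⊆H be the intersection over all left H-modules V of the annihilators of V[χ], a bi-ideal annihilated by the counit, and H^χ=H/Ξ_χ the quotient bialgebra. Then the characters of the bialgebra H^χ, viewed via the projection H→H^χ as a subset of the character group Ĥ of H, constitute a subgroup of Ĥ equal to the isotropy subgroup Ĥ^χ of χ under the action of Ĥ on invariant characters. -/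
/- Preliminaries: dynamical bases (Hopf algebra H, base algebra L) following Mudrov,
"On dynamical smash product". -/

noncomputable section
open TensorProduct LinearMap

namespace Dyn

open LinearMap TensorProduct

universe u

variable {k : Type*} [Field k] {H : Type u} [Ring H] [HopfAlgebra k H]
variable {L : Type*} [Ring L] [Algebra k L]

/-- The bi-ideal `Ξ_χ ⊆ H`: the intersection over all left `H`-modules `V` of the
annihilators of `V[χ] = {v : ι_χ(λ)·v = χ(λ)v for all λ}`. -/
def Xi (B : BaseAlgebra k H L) (χ : L →ₗ[k] k) : Set H :=
  {h : H | ∀ (V : Type u) (_ : AddCommGroup V) (_ : Module k V)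
      (ρ : H →ₗ[k] V →ₗ[k] V),
      (∀ v : V, ρ 1 v = v) →
      (∀ (h' h'' : H) (v : V), ρ (h' * h'') v = ρ h' (ρ h'' v)) →
      ∀ v : V, (∀ l : L, ρ (B.iota χ l) v = χ l • v) → ρ h v = 0}

/-! Pairing `ι_χ(λ)` with `η ∈ H^*` gives `χ(η(λ⁽¹⁾) λ^[∞])`, so `ι_χ(λ) - χ(λ) ∈ Ξ_χ` shows
that a character vanishing on `Ξ_χ` fixes `χ`. Conversely, if `α` fixes `χ`, then `1` lies in
`V[χ]` for `V = H` acted on through `α`, so `α` kills `Ξ_χ`. The fixed characters form a subgroup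
because, by coassociativity, `η ↦ (λ ↦ η(λ⁽¹⁾) λ^[∞])` turns convolution into composition, and
`α ∘ γ` is the convolution inverse of `α`. -/

open WithConv

section Coaction

variable (B : BaseAlgebra k H L)

lemma BaseAlgebra.coactEval_apply (η : H →ₗ[k] k) (l : L) :
    B.coactEval η l = TensorProduct.lid k L (rTensor L η (B.coact l)) := rfl

lemma BaseAlgebra.apply_iota (χ : L →ₗ[k] k) (η : H →ₗ[k] k) (l : L) :
    η (B.iota χ l) = χ (B.coactEval η l) := by
  rw [B.coactEval_apply]
  simp only [BaseAlgebra.iota, LinearMap.comp_apply, LinearEquiv.coe_coe]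
  induction B.coact l using TensorProduct.induction_on with
  | zero => simp
  | tmul h m => simp [mul_comm]
  | add x y hx hy => simp [hx, hy]

lemma BaseAlgebra.coactEval_counit :
    B.coactEval (Coalgebra.counit (R := k) (A := H)) = LinearMap.id :=
  LinearMap.ext B.counit_coact

lemma BaseAlgebra.coactEval_convMul (η θ : H →ₗ[k] k) :
    B.coactEval (toConv η * toConv θ).ofConv = B.coactEval θ ∘ₗ B.coactEval η := by
  have hsplit (t : H ⊗[k] L) :
      TensorProduct.lid k L (rTensor L (LinearMap.mul' k k ∘ₗ TensorProduct.map η θ)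
        ((TensorProduct.assoc k H H L).symm (lTensor H B.coact t))) =
      B.coactEval θ (TensorProduct.lid k L (rTensor L η t)) := by
    induction t using TensorProduct.induction_on with
    | zero => simp
    | tmul h l =>
      simp only [BaseAlgebra.coactEval, lTensor_tmul, rTensor_tmul, lid_tmul, map_smul,
        LinearMap.comp_apply, LinearEquiv.coe_coe]
      induction B.coact l using TensorProduct.induction_on with
      | zero => simp
      | tmul a m => simp [smul_smul]
      | add x y hx hy => simp [tmul_add, hx, hy]
    | add x y hx hy => simp only [map_add, hx, hy]
  ext l
  have hco := LinearMap.congr_fun B.coassoc l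
  simp only [LinearMap.comp_apply, LinearEquiv.coe_coe] at hco
  rw [LinearMap.comp_apply, B.coactEval_apply η, ← hsplit, ← hco, B.coactEval_apply,
    LinearMap.convMul_def]
  simp only [rTensor_comp, LinearMap.comp_apply]

/-- `η · χ = χ` for the action `(η · χ)(λ) = η(λ⁽¹⁾) χ(λ^[∞])`. -/
def BaseAlgebra.Fixes (χ : L →ₗ[k] k) (η : H →ₗ[k] k) : Prop :=
  ∀ l : L, χ (B.coactEval η l) = χ l

variable {B} {χ : L →ₗ[k] k}

lemma BaseAlgebra.fixes_counit : B.Fixes χ (Coalgebra.counit (R := k) (A := H)) := fun l => by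
  rw [B.coactEval_counit, LinearMap.id_apply]

lemma BaseAlgebra.Fixes.convMul {η θ : H →ₗ[k] k} (hη : B.Fixes χ η) (hθ : B.Fixes χ θ) :
    B.Fixes χ (toConv η * toConv θ).ofConv := fun l => by
  rw [B.coactEval_convMul, LinearMap.comp_apply, hθ, hη]

lemma BaseAlgebra.Fixes.of_convMul {η θ : H →ₗ[k] k}
    (hηθ : B.Fixes χ (toConv η * toConv θ).ofConv) (hθ : B.Fixes χ θ) : B.Fixes χ η := fun l => by
  rw [← hθ (B.coactEval η l), ← LinearMap.comp_apply (B.coactEval θ), ← B.coactEval_convMul, hηθ]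

end Coaction

section Xi

variable (B : BaseAlgebra k H L) (χ : L →ₗ[k] k)

lemma iota_sub_smul_one_mem_Xi (l : L) : B.iota χ l - χ l • 1 ∈ Xi B χ := by
  intro V _ _ ρ hρ_one _ v hv
  rw [map_sub, map_smul, LinearMap.sub_apply, LinearMap.smul_apply, hρ_one, hv, sub_self]

lemma eq_zero_of_mem_Xi {α : H →ₐ[k] k} (hα : B.Fixes χ α.toLinearMap) {h : H}
    (hh : h ∈ Xi B χ) : α h = 0 := by
  have h_smul : α h • (1 : H) = 0 := by
    refine hh H _ _ ((LinearMap.lsmul k H) ∘ₗ α.toLinearMap) (fun v => ?_) (fun h' h'' v => ?_)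
      1 (fun l => ?_)
    · simp
    · simp only [LinearMap.comp_apply, AlgHom.toLinearMap_apply, map_mul,
        LinearMap.lsmul_apply, mul_smul]
    · simp only [LinearMap.comp_apply, AlgHom.toLinearMap_apply, LinearMap.lsmul_apply]
      rw [← AlgHom.toLinearMap_apply, B.apply_iota, hα]
  simpa using congrArg α h_smul

lemma forall_mem_Xi_eq_zero_iff (α : H →ₐ[k] k) :
    (∀ h ∈ Xi B χ, α h = 0) ↔ B.Fixes χ α.toLinearMap := by
  refine ⟨fun hα l => ?_, fun hα _ => eq_zero_of_mem_Xi B χ hα⟩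
  have h_iota := hα _ (iota_sub_smul_one_mem_Xi B χ l)
  rw [map_sub, map_smul, map_one, smul_eq_mul, mul_one, sub_eq_zero] at h_iota
  rw [← B.apply_iota, AlgHom.toLinearMap_apply, h_iota]

end Xi

section Characters

def antipodeChar (α : H →ₐ[k] k) : H →ₐ[k] k :=
  AlgHom.ofLinearMap (α.toLinearMap ∘ₗ HopfAlgebra.antipode k)
    (by simp [HopfAlgebra.antipode_one])
    (fun x y => by simp [HopfAlgebra.antipode_mul_antidistrib, mul_comm])

lemma antipodeChar_toLinearMap (α : H →ₐ[k] k) :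
    (antipodeChar α).toLinearMap = α.toLinearMap ∘ₗ HopfAlgebra.antipode k := rfl

lemma antipodeChar_convMul_self (α : H →ₐ[k] k) :
    (toConv (antipodeChar α).toLinearMap * toConv α.toLinearMap).ofConv =
      Coalgebra.counit (R := k) (A := H) := by
  have h := LinearMap.algHom_comp_convMul_distrib α
    (toConv (HopfAlgebra.antipode k (A := H))) (toConv LinearMap.id)
  rw [LinearMap.antipode_mul_id, ofConv_toConv, ofConv_toConv, LinearMap.comp_id] at h
  rw [antipodeChar_toLinearMap, ← h]
  ext
  simp

end Characters

theorem stmt8_general (B : BaseAlgebra k H L) (χ : L →ₐ[k] k) :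
    -- equality with the isotropy subgroup
    {α : H →ₐ[k] k | ∀ h ∈ Xi B χ.toLinearMap, α h = 0} =
      {α : H →ₐ[k] k | ∀ l : L, χ (B.coactEval α.toLinearMap l) = χ l} ∧
    -- the set is a subgroup of `Ĥ`: it contains the identity `ε`, and is closed under
    -- the convolution product and the inverse `α ↦ α ∘ γ`
    (Bialgebra.counitAlgHom k H ∈
      {α : H →ₐ[k] k | ∀ h ∈ Xi B χ.toLinearMap, α h = 0}) ∧
    (∀ α β : H →ₐ[k] k, (∀ h ∈ Xi B χ.toLinearMap, α h = 0) →
      (∀ h ∈ Xi B χ.toLinearMap, β h = 0) →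
      ∃ c : H →ₐ[k] k, (∀ h ∈ Xi B χ.toLinearMap, c h = 0) ∧
        ∀ h : H, c h = (TensorProduct.lid k k)
          (TensorProduct.map α.toLinearMap β.toLinearMap
            (Coalgebra.comul (R := k) h))) ∧
    (∀ α : H →ₐ[k] k, (∀ h ∈ Xi B χ.toLinearMap, α h = 0) →
      ∃ c : H →ₐ[k] k, (∀ h ∈ Xi B χ.toLinearMap, c h = 0) ∧
        ∀ h : H, c h = α (HopfAlgebra.antipode (R := k) h)) := by
  have hXi := forall_mem_Xi_eq_zero_iff B χ.toLinearMap
  refine ⟨Set.ext hXi, (hXi _).2 BaseAlgebra.fixes_counit, fun α β hα hβ => ?_, fun α hα => ?_⟩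
  · exact ⟨(toConv α * toConv β).ofConv, (hXi _).2 (((hXi α).1 hα).convMul ((hXi β).1 hβ)),
      fun _ => rfl⟩
  · have h_inv : B.Fixes χ.toLinearMap
        (toConv (antipodeChar α).toLinearMap * toConv α.toLinearMap).ofConv := by
      rw [antipodeChar_convMul_self]
      exact BaseAlgebra.fixes_counit
    exact ⟨antipodeChar α, (hXi _).2 (h_inv.of_convMul ((hXi α).1 hα)), fun _ => rfl⟩

/-- The characters of the quotient bialgebra `H^χ = H/Ξ_χ`, viewed via
the projection `H → H^χ` as the subset of `Ĥ` of characters vanishing on `Ξ_χ`,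
constitute a subgroup of the character group `Ĥ` (under convolution), equal to the
isotropy subgroup `Ĥ^χ = {α : α·χ = χ}` of `χ`. -/
theorem stmt8 (B : BaseAlgebra k H L) (χ : L →ₐ[k] k) (hχ : B.IsInvChar χ) :
    -- equality with the isotropy subgroup
    {α : H →ₐ[k] k | ∀ h ∈ Xi B χ.toLinearMap, α h = 0} =
      {α : H →ₐ[k] k | ∀ l : L, χ (B.coactEval α.toLinearMap l) = χ l} ∧
    -- the set is a subgroup of `Ĥ`: it contains the identity `ε`, and is closed under
    -- the convolution product and the inverse `α ↦ α ∘ γ`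
    (Bialgebra.counitAlgHom k H ∈
      {α : H →ₐ[k] k | ∀ h ∈ Xi B χ.toLinearMap, α h = 0}) ∧
    (∀ α β : H →ₐ[k] k, (∀ h ∈ Xi B χ.toLinearMap, α h = 0) →
      (∀ h ∈ Xi B χ.toLinearMap, β h = 0) →
      ∃ c : H →ₐ[k] k, (∀ h ∈ Xi B χ.toLinearMap, c h = 0) ∧
        ∀ h : H, c h = (TensorProduct.lid k k)
          (TensorProduct.map α.toLinearMap β.toLinearMap
            (Coalgebra.comul (R := k) h))) ∧
    (∀ α : H →ₐ[k] k, (∀ h ∈ Xi B χ.toLinearMap, α h = 0) →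
      ∃ c : H →ₐ[k] k, (∀ h ∈ Xi B χ.toLinearMap, c h = 0) ∧
        ∀ h : H, c h = α (HopfAlgebra.antipode (R := k) h)) :=
  stmt8_general B χ

end Dyn
end
end

section
/- Let (H,L) be a dynamical base and χ a projective invariant character of L, with idempotent e_χ∈L^χ satisfying χ(e_χ)=1, and set t_χ=ι_χ(e_χ), a central idempotent of H. Then for every left H-module V one has V[χ]=t_χV, i.e. v∈V satisfies ι_χ(λ)·v=χ(λ)v for all λ∈L if and only if t_χ·v=v. -/
/- Preliminaries: dynamical bases (Hopf algebra H, base algebra L) following Mudrov,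
"On dynamical smash product". -/

noncomputable section
open TensorProduct LinearMap

/-! `ι_χ` is the composite of the coaction, an algebra map `L → H ⊗ L`, with `id ⊗ χ`, so it is
multiplicative. Hence `ι_χ(λ) t_χ = ι_χ(λ e_χ) = χ(λ) t_χ`, and any `v` with `t_χ v = v` satisfies
`ι_χ(λ) v = ι_χ(λ) t_χ v = χ(λ) v`; conversely `λ = e_χ` gives `t_χ v = χ(e_χ) v = v`. -/

namespace Dyn

universe u

section

variable {k : Type*} [Field k] {H : Type*} [Ring H] [HopfAlgebra k H]
  {L : Type*} [Ring L] [Algebra k L]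

theorem BaseAlgebra.iota_mul (B : BaseAlgebra k H L) (χ : L →ₐ[k] k) (l m : L) :
    B.iota χ.toLinearMap (l * m) = B.iota χ.toLinearMap l * B.iota χ.toLinearMap m := by
  let idTensorχ : H ⊗[k] L →ₐ[k] H :=
    (Algebra.TensorProduct.rid k k H).toAlgHom.comp (Algebra.TensorProduct.map (AlgHom.id k H) χ)
  change idTensorχ (B.coact (l * m)) = idTensorχ (B.coact l) * idTensorχ (B.coact m)
  rw [B.coact_mul, map_mul]

theorem BaseAlgebra.iota_mul_iota_of_isLeftGen (B : BaseAlgebra k H L) (χ : L →ₐ[k] k)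
    {e : L} (he : IsLeftGen χ e) (l : L) :
    B.iota χ.toLinearMap l * B.iota χ.toLinearMap e = χ l • B.iota χ.toLinearMap e := by
  rw [← B.iota_mul, he l, map_smul]

end

theorem apply_eq_smul_of_mul_eq_smul {k H V : Type*} [CommSemiring k] [Semiring H] [Module k H]
    [AddCommMonoid V] [Module k V] {ρ : H →ₗ[k] V →ₗ[k] V}
    (hρ : ∀ (h h' : H) (v : V), ρ (h * h') v = ρ h (ρ h' v))
    {a t : H} {c : k} (hat : a * t = c • t) {v : V} (hv : ρ t v = v) :
    ρ a v = c • v := by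
  rw [← hv, ← hρ, hat, map_smul, LinearMap.smul_apply]

theorem stmt9_general {k : Type*} [Field k] {H : Type u} [Ring H] [HopfAlgebra k H]
    {L : Type*} [Ring L] [Algebra k L]
    (B : BaseAlgebra k H L) (χ : L →ₐ[k] k)
    (e : L) (he : IsLeftGen χ e) (hχe : χ e = 1) :
    ∀ (V : Type u) (_ : AddCommGroup V) (_ : Module k V)
      (ρ : H →ₗ[k] V →ₗ[k] V),
      (∀ v : V, ρ 1 v = v) →
      (∀ (h h' : H) (v : V), ρ (h * h') v = ρ h (ρ h' v)) →
      ∀ v : V, (∀ l : L, ρ (B.iota χ.toLinearMap l) v = χ l • v) ↔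
        ρ (B.iota χ.toLinearMap e) v = v := by
  intro V _ _ ρ _ hρ v
  refine ⟨fun hv => by rw [hv e, hχe, one_smul], fun hv l => ?_⟩
  exact apply_eq_smul_of_mul_eq_smul hρ (B.iota_mul_iota_of_isLeftGen χ he l) hv

/-- Let `χ` be a projective invariant character of `L`, with idempotent
generator `e_χ ∈ L^χ` satisfying `χ(e_χ) = 1`, and `t_χ = ι_χ(e_χ)`.  Then for every
left `H`-module `V` one has `V[χ] = t_χ V`: a vector `v` satisfies
`ι_χ(λ)·v = χ(λ)v` for all `λ ∈ L` if and only if `t_χ · v = v`. -/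
theorem stmt9 {k : Type*} [Field k] {H : Type u} [Ring H] [HopfAlgebra k H]
    {L : Type*} [Ring L] [Algebra k L]
    (B : BaseAlgebra k H L) (χ : L →ₐ[k] k) (hχ : B.IsInvChar χ)
    (e : L) (he : IsLeftGen χ e) (hee : e * e = e) (hχe : χ e = 1) :
    ∀ (V : Type u) (_ : AddCommGroup V) (_ : Module k V)
      (ρ : H →ₗ[k] V →ₗ[k] V),
      (∀ v : V, ρ 1 v = v) →
      (∀ (h h' : H) (v : V), ρ (h * h') v = ρ h (ρ h' v)) →
      ∀ v : V, (∀ l : L, ρ (B.iota χ.toLinearMap l) v = χ l • v) ↔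
        ρ (B.iota χ.toLinearMap e) v = v :=
  stmt9_general B χ e he hχe
end Dyn
end
end
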